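/- In the homogeneous-model equilibrium with attention bartering, every club member's total utility weakly exceeds her total utility in the no-bartering equilibrium, while her consumption utility is strictly lower: if member of club (a,b] then ΔV = ∫_a^b (x − q₀ − c)dx + I(b − a) ≥ 0 and ΔU = ∫_a^b (x − q₀) dx < 0 for a < b ≤ q₀. -/

import Mathlib

theorem intervalIntegral.integral_sub_const_eq (a b q : ℝ) :
    ∫ x in a..b, (x - q) = (b - a) * ((a + b) / 2 - q) := by
  rw [intervalIntegral.integral_sub intervalIntegral.intervalIntegrable_id intervalIntegrable_const,
    integral_id, intervalIntegral.integral_const, smul_eq_mul]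
  ring

theorem intervalIntegral.integral_sub_const_neg {a b q : ℝ} (hab : a < b) (hbq : b ≤ q) :
    ∫ x in a..b, (x - q) < 0 := by
  rw [intervalIntegral.integral_sub_const_eq]
  exact mul_neg_of_pos_of_neg (sub_pos.mpr hab) (by linarith)

theorem club_members_gain_total_lose_consumption_general (q₀ c : ℝ)
    (I : ℝ → ℝ) (hI0 : I 0 = 0)
    (a b : ℝ) (ha : 0 ≤ a) (hab : a < b) (hb : b ≤ q₀)
    (hmax : ∀ a' ∈ Set.Icc (0 : ℝ) b,
      (∫ x in a'..b, (x - q₀ - c)) + I (b - a') ≤ (∫ x in a..b, (x - q₀ - c)) + I (b - a)) :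
    0 ≤ (∫ x in a..b, (x - q₀ - c)) + I (b - a) ∧
    (∫ x in a..b, (x - q₀)) < 0 := by
  refine ⟨?_, intervalIntegral.integral_sub_const_neg hab hb⟩
  -- lurking, `a' = b`, is an admissible deviation with payoff `I 0 = 0`
  simpa [hI0] using hmax b ⟨ha.trans hab.le, le_rfl⟩

/-- In the homogeneous-model equilibrium with attention bartering, a member of an
equilibrium club `(a, b]` (where `a` maximizes the club payoff over `[0, b]`, and lurking,
i.e. `a = b` with payoff `I 0 = 0`, is available) has total utility weakly exceeding her
no-bartering total utility, while her consumption utility is strictly lower: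
`ΔV = ∫ x in a..b, (x - q₀ - c) + I (b - a) ≥ 0` and `ΔU = ∫ x in a..b, (x - q₀) < 0`
for `0 ≤ a < b ≤ q₀`. -/
theorem club_members_gain_total_lose_consumption (q₀ c : ℝ) (hq₀ : q₀ ∈ Set.Ioo (0 : ℝ) 1)
    (hc : 0 < c) (I : ℝ → ℝ) (hI0 : I 0 = 0)
    (a b : ℝ) (ha : 0 ≤ a) (hab : a < b) (hb : b ≤ q₀)
    (hmax : ∀ a' ∈ Set.Icc (0 : ℝ) b,
      (∫ x in a'..b, (x - q₀ - c)) + I (b - a') ≤ (∫ x in a..b, (x - q₀ - c)) + I (b - a)) :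
    0 ≤ (∫ x in a..b, (x - q₀ - c)) + I (b - a) ∧
    (∫ x in a..b, (x - q₀)) < 0 :=
  club_members_gain_total_lose_consumption_general q₀ c I hI0 a b ha hab hb hmax
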